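/- For every y ∈ ℝ³ with y ≠ 0, the isotropy type set of G²(y) is the disjoint union M_{G²(y)} = B₁(y) ∪ B₂(y) ∪ B₃(y) ∪ B₄(y), where B₁(y) = {(λy, βy, 0, 0) : λ,β ∈ ℝ, λ ≠ β}, B₂(y) = {(λy, βy, 0, δy) : λ,β,δ ∈ ℝ, δ ≠ 0}, B₃(y) = {(λy, βy, γy, 0) : λ,β,γ ∈ ℝ, γ ≠ 0}, and B₄(y) = {(λy, βy, γy, δy) : λ,β,γ,δ ∈ ℝ, γ ≠ 0, δ ≠ 0}. -/

import Mathlib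

open Matrix

/-- Vectors in ℝ³. -/
abbrev V3 : Type := Fin 3 → ℝ

/-- The two-body phase space M = ℝ³ × ℝ³ × ℝ³ × ℝ³, points (q¹, q², p¹, p²). -/
abbrev M2B : Type := V3 × V3 × V3 × V3

/-- A 3×3 real matrix is special orthogonal. -/
def SO3 (A : Matrix (Fin 3) (Fin 3) ℝ) : Prop := Aᵀ * A = 1 ∧ A.det = 1

/-- The action of (A, a) ∈ SE(3) on the phase space:
(A,a)·(q¹,q²,p¹,p²) = (Aq¹+a, Aq²+a, Ap¹, Ap²). -/
def act (A : Matrix (Fin 3) (Fin 3) ℝ) (a : V3) (m : M2B) : M2B :=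
  (A *ᵥ m.1 + a, A *ᵥ m.2.1 + a, A *ᵥ m.2.2.1, A *ᵥ m.2.2.2)

/-- The isotropy subgroup SE(3)_{(q,p)} of a point of M, as a set of pairs (A,a)
with A special orthogonal. -/
def isotropy (m : M2B) : Set (Matrix (Fin 3) (Fin 3) ℝ × V3) :=
  {g | SO3 g.1 ∧ act g.1 g.2 m = m}

/-- The momentum map J(q¹,q²,p¹,p²) = (q¹×p¹ + q²×p², p¹+p²). -/
def Jmom (m : M2B) : V3 × V3 :=
  (m.1 ⨯₃ m.2.2.1 + m.2.1 ⨯₃ m.2.2.2, m.2.2.1 + m.2.2.2)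

/-- G¹(x) = {(A,a) ∈ SE(3) : a = x − Ax}. -/
def G1 (x : V3) : Set (Matrix (Fin 3) (Fin 3) ℝ × V3) :=
  {g | SO3 g.1 ∧ g.2 = x - g.1 *ᵥ x}

/-- G²(y) = {(A,0) ∈ SE(3) : Ay = y}. -/
def G2 (y : V3) : Set (Matrix (Fin 3) (Fin 3) ℝ × V3) :=
  {g | SO3 g.1 ∧ g.1 *ᵥ y = y ∧ g.2 = 0}

/-- G³(x,y) = {(A,a) ∈ SE(3) : Ay = y and a = x − Ax}. -/
def G3 (x y : V3) : Set (Matrix (Fin 3) (Fin 3) ℝ × V3) :=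
  {g | SO3 g.1 ∧ g.1 *ᵥ y = y ∧ g.2 = x - g.1 *ᵥ x}

/-- G⁴ = {(I, 0)}, the trivial subgroup. -/
def G4 : Set (Matrix (Fin 3) (Fin 3) ℝ × V3) := {((1 : Matrix (Fin 3) (Fin 3) ℝ), (0 : V3))}

def B1 (y : V3) : Set M2B := {m | ∃ l b : ℝ, l ≠ b ∧ m = (l • y, b • y, 0, 0)}
def B2 (y : V3) : Set M2B := {m | ∃ l b d : ℝ, d ≠ 0 ∧ m = (l • y, b • y, 0, d • y)}
def B3 (y : V3) : Set M2B := {m | ∃ l b c : ℝ, c ≠ 0 ∧ m = (l • y, b • y, c • y, 0)}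
def B4 (y : V3) : Set M2B :=
  {m | ∃ l b c d : ℝ, c ≠ 0 ∧ d ≠ 0 ∧ m = (l • y, b • y, c • y, d • y)}

/-!
The half-turn about `y` lies in `G²(y)`, and its fixed vectors are the multiples of `y`; so a
point whose isotropy group is `G²(y)` has all four components on the axis `ℝ y`. For such an axial
point, a nonzero momentum, or two distinct positions, force every symmetry `(A, a)` to fix `y` and
to have `a = 0`. The remaining axial points `(q, q, 0, 0)` are also fixed by the half-turns about
the lines through `q` perpendicular to `y`, which move `y`. The four sets `Bᵢ(y)` are told apart
by which of the two momenta vanish.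
-/

namespace Matrix
variable {n : Type*} [Fintype n] [DecidableEq n]

noncomputable def halfTurn (z : n → ℝ) : Matrix n n ℝ := (2 / (z ⬝ᵥ z)) • vecMulVec z z - 1

theorem halfTurn_mulVec (z v : n → ℝ) :
    halfTurn z *ᵥ v = (2 * (z ⬝ᵥ v) / (z ⬝ᵥ z)) • z - v := by
  rw [halfTurn, sub_mulVec, smul_mulVec, vecMulVec_mulVec, one_mulVec, op_smul_eq_smul,
    smul_smul]
  ring_nf

theorem transpose_halfTurn (z : n → ℝ) : (halfTurn z)ᵀ = halfTurn z := by
  rw [halfTurn, transpose_sub, transpose_smul, transpose_vecMulVec, transpose_one]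

theorem dotProduct_halfTurn_mulVec {z : n → ℝ} (hz : z ≠ 0) (v : n → ℝ) :
    z ⬝ᵥ (halfTurn z *ᵥ v) = z ⬝ᵥ v := by
  have hzz : z ⬝ᵥ z ≠ 0 := dotProduct_self_eq_zero.not.mpr hz
  rw [halfTurn_mulVec, dotProduct_sub, dotProduct_smul, smul_eq_mul]
  field_simp
  ring

theorem halfTurn_mul_self {z : n → ℝ} (hz : z ≠ 0) : halfTurn z * halfTurn z = 1 := by
  refine ext_iff_mulVec.mpr fun v => ?_
  rw [← mulVec_mulVec, one_mulVec, halfTurn_mulVec z (halfTurn z *ᵥ v),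
    dotProduct_halfTurn_mulVec hz, halfTurn_mulVec, sub_sub_cancel]

theorem det_halfTurn {z : n → ℝ} (hz : z ≠ 0) :
    (halfTurn z).det = (-1) ^ (Fintype.card n + 1) := by
  have hzz : z ⬝ᵥ z ≠ 0 := dotProduct_self_eq_zero.not.mpr hz
  have : halfTurn z = -(1 + replicateCol Unit (-(2 / (z ⬝ᵥ z)) • z) * replicateRow Unit z) := by
    rw [← vecMulVec_eq, smul_vecMulVec, halfTurn, neg_add, neg_smul, neg_neg, neg_add_eq_sub]
  rw [this, det_neg, det_one_add_replicateCol_mul_replicateRow, dotProduct_smul, smul_eq_mul]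
  field_simp
  ring

theorem halfTurn_mulVec_self {z : n → ℝ} (hz : z ≠ 0) : halfTurn z *ᵥ z = z := by
  have hzz : z ⬝ᵥ z ≠ 0 := dotProduct_self_eq_zero.not.mpr hz
  rw [halfTurn_mulVec, mul_div_assoc, div_self hzz, mul_one, two_smul, add_sub_cancel_right]

theorem halfTurn_mulVec_of_dotProduct_eq_zero {z v : n → ℝ} (h : z ⬝ᵥ v = 0) :
    halfTurn z *ᵥ v = -v := by
  rw [halfTurn_mulVec, h, mul_zero, zero_div, zero_smul, zero_sub]

theorem exists_smul_eq_of_halfTurn_mulVec_eq {z v : n → ℝ} (h : halfTurn z *ᵥ v = v) :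
    ∃ c : ℝ, c • z = v := by
  refine ⟨(z ⬝ᵥ v) / (z ⬝ᵥ z), ?_⟩
  rw [halfTurn_mulVec, sub_eq_iff_eq_add, ← two_smul ℝ v] at h
  rw [← smul_right_inj (two_ne_zero : (2:ℝ) ≠ 0), ← h, smul_smul]
  ring_nf

end Matrix

theorem SO3_halfTurn {z : V3} (hz : z ≠ 0) : SO3 (halfTurn z) :=
  ⟨by rw [transpose_halfTurn, halfTurn_mul_self hz], by rw [det_halfTurn hz]; norm_num⟩

section IsotropyOfAxialPoints

variable {y : V3}

theorem G2_subset_isotropy (l b c d : ℝ) : G2 y ⊆ isotropy (l • y, b • y, c • y, d • y) := by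
  rintro ⟨A, a⟩ ⟨hA, hAy, rfl⟩
  exact ⟨hA, by simp [act, mulVec_smul, hAy]⟩

theorem isotropy_subset_G2 {l b c d : ℝ} (h : c ≠ 0 ∨ d ≠ 0 ∨ l ≠ b) :
    isotropy (l • y, b • y, c • y, d • y) ⊆ G2 y := by
  rintro ⟨A, a⟩ ⟨hA, hact⟩
  simp only [act, mulVec_smul, Prod.mk.injEq] at hact
  obtain ⟨hq₁, hq₂, hp₁, hp₂⟩ := hact
  have hAy : A *ᵥ y = y := by
    rcases h with hc | hd | hlb
    · exact (smul_right_inj hc).mp hp₁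
    · exact (smul_right_inj hd).mp hp₂
    · refine (smul_right_inj (sub_ne_zero.mpr hlb)).mp ?_
      rw [sub_smul, sub_smul, ← hq₁, ← hq₂, add_sub_add_right_eq_sub]
  refine ⟨hA, hAy, ?_⟩
  rwa [hAy, add_eq_left] at hq₁

theorem exists_eq_smul_of_G2_subset_isotropy (hy : y ≠ 0) {m : M2B} (h : G2 y ⊆ isotropy m) :
    ∃ l b c d : ℝ, m = (l • y, b • y, c • y, d • y) := by
  obtain ⟨q₁, q₂, p₁, p₂⟩ := m
  obtain ⟨-, hfix⟩ := h (show (halfTurn y, (0 : V3)) ∈ G2 y from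
    ⟨SO3_halfTurn hy, halfTurn_mulVec_self hy, rfl⟩)
  simp only [act, add_zero, Prod.mk.injEq] at hfix
  obtain ⟨hq₁, hq₂, hp₁, hp₂⟩ := hfix
  obtain ⟨l, rfl⟩ := exists_smul_eq_of_halfTurn_mulVec_eq hq₁
  obtain ⟨b, rfl⟩ := exists_smul_eq_of_halfTurn_mulVec_eq hq₂
  obtain ⟨c, rfl⟩ := exists_smul_eq_of_halfTurn_mulVec_eq hp₁
  obtain ⟨d, rfl⟩ := exists_smul_eq_of_halfTurn_mulVec_eq hp₂
  exact ⟨l, b, c, d, rfl⟩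

theorem halfTurn_mem_isotropy_diag {z : V3} (hz : z ≠ 0) (q : V3) :
    (halfTurn z, q - halfTurn z *ᵥ q) ∈ isotropy (q, q, 0, 0) :=
  ⟨SO3_halfTurn hz, by simp [act]⟩

theorem not_isotropy_diag_subset_G2 (hy : y ≠ 0) (q : V3) : ¬ isotropy (q, q, 0, 0) ⊆ G2 y := by
  intro h
  obtain ⟨z, hz, hzy⟩ := exists_ne_zero_dotProduct_eq_zero y
  obtain ⟨-, hfix, -⟩ := h (halfTurn_mem_isotropy_diag hz q)
  rw [halfTurn_mulVec_of_dotProduct_eq_zero hzy] at hfix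
  exact hy (self_eq_neg.mp hfix.symm)

theorem isotropy_eq_G2_iff (hy : y ≠ 0) {m : M2B} :
    isotropy m = G2 y ↔
      ∃ l b c d : ℝ, (c ≠ 0 ∨ d ≠ 0 ∨ l ≠ b) ∧ m = (l • y, b • y, c • y, d • y) := by
  constructor
  · intro hm
    obtain ⟨l, b, c, d, rfl⟩ := exists_eq_smul_of_G2_subset_isotropy hy hm.ge
    refine ⟨l, b, c, d, ?_, rfl⟩
    by_contra! h
    obtain ⟨rfl, rfl, rfl⟩ := h
    simp only [zero_smul] at hm
    exact not_isotropy_diag_subset_G2 hy _ hm.le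
  · rintro ⟨l, b, c, d, h, rfl⟩
    exact (isotropy_subset_G2 h).antisymm (G2_subset_isotropy l b c d)

end IsotropyOfAxialPoints

theorem mem_B1_union_B2_union_B3_union_B4_iff {y : V3} {m : M2B} :
    m ∈ B1 y ∪ B2 y ∪ B3 y ∪ B4 y ↔
      ∃ l b c d : ℝ, (c ≠ 0 ∨ d ≠ 0 ∨ l ≠ b) ∧ m = (l • y, b • y, c • y, d • y) := by
  constructor
  · rintro (((⟨l, b, hlb, rfl⟩ | ⟨l, b, d, hd, rfl⟩) | ⟨l, b, c, hc, rfl⟩) |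
      ⟨l, b, c, d, hc, -, rfl⟩)
    · exact ⟨l, b, 0, 0, Or.inr (Or.inr hlb), by simp⟩
    · exact ⟨l, b, 0, d, Or.inr (Or.inl hd), by simp⟩
    · exact ⟨l, b, c, 0, Or.inl hc, by simp⟩
    · exact ⟨l, b, c, d, Or.inl hc, rfl⟩
  · rintro ⟨l, b, c, d, h, rfl⟩
    by_cases hc : c = 0 <;> by_cases hd : d = 0
    · subst hc hd
      exact Or.inl <| Or.inl <| Or.inl ⟨l, b, by simpa using h, by simp⟩
    · subst hc
      exact Or.inl <| Or.inl <| Or.inr ⟨l, b, d, hd, by simp⟩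
    · subst hd
      exact Or.inl <| Or.inr ⟨l, b, c, hc, by simp⟩
    · exact Or.inr ⟨l, b, c, d, hc, hd, rfl⟩

section Momenta

variable {y : V3} {m : M2B}

theorem momenta_of_mem_B1 (h : m ∈ B1 y) : m.2.2.1 = 0 ∧ m.2.2.2 = 0 := by
  obtain ⟨l, b, -, rfl⟩ := h
  exact ⟨rfl, rfl⟩

theorem momenta_of_mem_B2 (hy : y ≠ 0) (h : m ∈ B2 y) : m.2.2.1 = 0 ∧ m.2.2.2 ≠ 0 := by
  obtain ⟨l, b, d, hd, rfl⟩ := h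
  exact ⟨rfl, smul_ne_zero hd hy⟩

theorem momenta_of_mem_B3 (hy : y ≠ 0) (h : m ∈ B3 y) : m.2.2.1 ≠ 0 ∧ m.2.2.2 = 0 := by
  obtain ⟨l, b, c, hc, rfl⟩ := h
  exact ⟨smul_ne_zero hc hy, rfl⟩

theorem momenta_of_mem_B4 (hy : y ≠ 0) (h : m ∈ B4 y) : m.2.2.1 ≠ 0 ∧ m.2.2.2 ≠ 0 := by
  obtain ⟨l, b, c, d, hc, hd, rfl⟩ := h
  exact ⟨smul_ne_zero hc hy, smul_ne_zero hd hy⟩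

end Momenta

theorem stmt2 (y : V3) (hy : y ≠ 0) :
    {m : M2B | isotropy m = G2 y} = B1 y ∪ B2 y ∪ B3 y ∪ B4 y ∧
    Disjoint (B1 y) (B2 y) ∧ Disjoint (B1 y) (B3 y) ∧ Disjoint (B1 y) (B4 y) ∧
    Disjoint (B2 y) (B3 y) ∧ Disjoint (B2 y) (B4 y) ∧ Disjoint (B3 y) (B4 y) := by
  refine ⟨?_, ?_, ?_, ?_, ?_, ?_, ?_⟩
  · ext m
    exact (isotropy_eq_G2_iff hy).trans mem_B1_union_B2_union_B3_union_B4_iff.symm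
  · exact Set.disjoint_left.2 fun _ h h' => (momenta_of_mem_B2 hy h').2 (momenta_of_mem_B1 h).2
  · exact Set.disjoint_left.2 fun _ h h' => (momenta_of_mem_B3 hy h').1 (momenta_of_mem_B1 h).1
  · exact Set.disjoint_left.2 fun _ h h' => (momenta_of_mem_B4 hy h').1 (momenta_of_mem_B1 h).1
  · exact Set.disjoint_left.2 fun _ h h' => (momenta_of_mem_B2 hy h).2 (momenta_of_mem_B3 hy h').2
  · exact Set.disjoint_left.2 fun _ h h' => (momenta_of_mem_B4 hy h').1 (momenta_of_mem_B2 hy h).1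
  · exact Set.disjoint_left.2 fun _ h h' => (momenta_of_mem_B4 hy h').2 (momenta_of_mem_B3 hy h).2
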